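/- arXiv:2202.10523 — 2 statements merged into one kernel-verified Lean document; each statement's English description precedes it below -/
import Mathlib

section
/- One-step Lyapunov contraction for SSI-HG under the strong MVI assumption (conditional one-iteration inequality from the proof of Theorem 2, stated deterministically with conditional expectations written as averages over the coordinate choice). Suppose (w*, δ*) is a solution of the strong MVI with parameter μ > 0, let σ, τ > 0 satisfy κ := max{L12·(στn)^{1/2}, L11·σ} ≤ 1/3, and set θ = max{ 1/(1 + μσ), (1 + (n−1)μτ/n)/(1 + μτ) }. Let w^{k−1}, w^k, w^{k+1} ∈ E and δ^{k−1}, δ^k ∈ F satisfy: q^k = ∇_w φ(w^{k−1}, δ^{k−1}) − (n−1)(∇_w φ(w^k, δ^k) − ∇_w φ(w^k, δ^{k−1})), and there is γ_f^{k+1} ∈ ∂f(w^{k+1}) with 0 = γ_f^{k+1} + σ^{−1}(w^{k+1} − w^k) + ∇_w φ(w^k, δ^k) + θ(∇_w φ(w^k, δ^k) − q^k). Let δ̂^{k+1} ∈ F be such that there is γ̂_g^{k+1} ∈ ∂g(δ̂^{k+1}) with 0 = γ̂_g^{k+1} + τ^{−1}(δ̂^{k+1} − δ^k) − ∇_δ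 φ(w^{k+1}, δ̂^{k+1}). For i ∈ {1,…,n}, let δ^{(i)} ∈ F agree with δ^k except that its i-th coordinate equals δ̂^{k+1}_i, and set q^{(i)} = ∇_w φ(w^k, δ^k) − (n−1)(∇_w φ(w^{k+1}, δ^{(i)}) − ∇_w φ(w^{k+1}, δ^k)). Write E_i for the average (1/n)∑_{i=1}^n. Then θ·[ ⟨w* − w^k, ∇_w φ(w^k, δ^k) − q^k⟩ + ((1 + μσ)/(2σ))‖w* − w^k‖² + (n(1 + μτ)/(2τ))‖δ* − δ^k‖² + (κ/(2σ))‖w^k − w^{k−1}‖² + (nκ/(2τ))‖δ^k − δ^{k−1}‖² ] ≥ (1/n)∑_{i=1}^n ⟨w* − w^{k+1}, ∇_w φ(w^{k+1}, δ^{(i)}) − q^{(i)}⟩ + ((1 + μσ)/(2σ))‖w* − w^{k+1}‖² + (n(1 + μτ)/(2τ))·E_i‖δ* − δ^{(i)}‖² + (κ/(2σ))‖w^{k+1} − w^k‖² + (nκ/(2τ))·E_i‖δ^{(i)} − δ^k‖². -/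
open scoped RealInnerProductSpace
set_option maxHeartbeats 2000000

/-- `γ` is a subgradient of `h` at `x`. -/
def IsSubgradient {X : Type*} [NormedAddCommGroup X] [InnerProductSpace ℝ X]
    (h : X → ℝ) (x γ : X) : Prop :=
  ∀ u, h u ≥ h x + ⟪γ, u - x⟫

/-- The point of `PiLp 2 Fd` that agrees with `δ` in all coordinates except that its
`i`-th coordinate equals `x`. -/
def updCoord {n : ℕ} {Fd : Fin n → Type*} [∀ i, NormedAddCommGroup (Fd i)]
    (δ : PiLp 2 Fd) (i : Fin n) (x : Fd i) : PiLp 2 Fd :=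
  WithLp.toLp 2 (Function.update δ i x)

/-- One-step Lyapunov contraction for SSI-HG under the strong MVI assumption
(conditional one-iteration inequality from the proof of Theorem 2, stated
deterministically with conditional expectations written as averages over the coordinate
choice). -/
theorem ssihg_one_step_lyapunov_contraction_strong_mvi
    {n : ℕ} (hn : 1 ≤ n)
    {E : Type*} [NormedAddCommGroup E] [InnerProductSpace ℝ E] [FiniteDimensional ℝ E]
    {Fd : Fin n → Type*} [∀ i, NormedAddCommGroup (Fd i)]
    [∀ i, InnerProductSpace ℝ (Fd i)] [∀ i, FiniteDimensional ℝ (Fd i)]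
    (φ : ∀ i, E → Fd i → ℝ)
    (gw : ∀ i, E → Fd i → E) (gd : ∀ i, E → Fd i → Fd i)
    (hgw : ∀ (i : Fin n) (w : E) (d : Fd i),
      HasGradientAt (fun w' => φ i w' d) (gw i w d) w)
    (hgd : ∀ (i : Fin n) (w : E) (d : Fd i),
      HasGradientAt (fun d' => φ i w d') (gd i w d) d)
    (Gw : E → PiLp 2 Fd → E)
    (hGw : ∀ w δ, Gw w δ = ∑ i, gw i w (δ i))
    (Gd : E → PiLp 2 Fd → PiLp 2 Fd)
    (hGd : ∀ w δ i, Gd w δ i = gd i w (δ i))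
    (L11 L12 : ℝ) (hL11 : 0 < L11) (hL12 : 0 < L12)
    (hLw : ∀ (w w' : E) (δ : PiLp 2 Fd), ‖Gw w δ - Gw w' δ‖ ≤ L11 * ‖w - w'‖)
    (hLwd : ∀ (w : E) (δ δ' : PiLp 2 Fd), ‖Gw w δ - Gw w δ'‖ ≤ L12 * ‖δ - δ'‖)
    (f : E → ℝ) (hf : ConvexOn ℝ Set.univ f)
    (gi : ∀ i, Fd i → ℝ) (hgi : ∀ i, ConvexOn ℝ Set.univ (gi i))
    (wstar : E) (δstar : PiLp 2 Fd) (μ : ℝ) (hμ : 0 < μ)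
    (hMVI : ∀ (w : E) (δ : PiLp 2 Fd) (γf : E) (γg : PiLp 2 Fd),
      IsSubgradient f w γf → (∀ i, IsSubgradient (gi i) (δ i) (γg i)) →
      ⟪γf + Gw w δ, w - wstar⟫ + ⟪γg - Gd w δ, δ - δstar⟫ ≥
        (μ / 2) * (‖w - wstar‖ ^ 2 + ‖δ - δstar‖ ^ 2))
    (σ τ : ℝ) (hσ : 0 < σ) (hτ : 0 < τ)
    (κ : ℝ) (hκ : κ = max (L12 * Real.sqrt (σ * τ * (n : ℝ))) (L11 * σ))
    (hκle : κ ≤ 1 / 3)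
    (θ : ℝ)
    (hθ : θ = max (1 / (1 + μ * σ))
      ((1 + ((n : ℝ) - 1) * μ * τ / (n : ℝ)) / (1 + μ * τ)))
    (wkm1 wk wk1 : E) (δkm1 δk : PiLp 2 Fd)
    (qk : E)
    (hq : qk = Gw wkm1 δkm1 - ((n : ℝ) - 1) • (Gw wk δk - Gw wk δkm1))
    (hupw : ∃ γf : E, IsSubgradient f wk1 γf ∧
      (0 : E) = γf + σ⁻¹ • (wk1 - wk) + Gw wk δk + θ • (Gw wk δk - qk))
    (δhat : PiLp 2 Fd)
    (hupd : ∃ γghat : PiLp 2 Fd, (∀ i, IsSubgradient (gi i) (δhat i) (γghat i)) ∧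
      (0 : PiLp 2 Fd) = γghat + τ⁻¹ • (δhat - δk) - Gd wk1 δhat)
    (q : Fin n → E)
    (hqi : ∀ i, q i = Gw wk δk
      - ((n : ℝ) - 1) • (Gw wk1 (updCoord δk i (δhat i)) - Gw wk1 δk)) :
    θ * (⟪wstar - wk, Gw wk δk - qk⟫
        + ((1 + μ * σ) / (2 * σ)) * ‖wstar - wk‖ ^ 2
        + ((n : ℝ) * (1 + μ * τ) / (2 * τ)) * ‖δstar - δk‖ ^ 2
        + (κ / (2 * σ)) * ‖wk - wkm1‖ ^ 2
        + ((n : ℝ) * κ / (2 * τ)) * ‖δk - δkm1‖ ^ 2) ≥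
      (1 / (n : ℝ)) * (∑ i, ⟪wstar - wk1, Gw wk1 (updCoord δk i (δhat i)) - q i⟫)
        + ((1 + μ * σ) / (2 * σ)) * ‖wstar - wk1‖ ^ 2
        + ((n : ℝ) * (1 + μ * τ) / (2 * τ)) *
            ((1 / (n : ℝ)) * ∑ i, ‖δstar - updCoord δk i (δhat i)‖ ^ 2)
        + (κ / (2 * σ)) * ‖wk1 - wk‖ ^ 2
        + ((n : ℝ) * κ / (2 * τ)) *
            ((1 / (n : ℝ)) * ∑ i, ‖updCoord δk i (δhat i) - δk‖ ^ 2) := by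
  -- ℝ-level basic facts
  have hnR : (1:ℝ) ≤ (n:ℝ) := by exact_mod_cast hn
  have hn0 : (0:ℝ) < (n:ℝ) := by linarith
  have hnne : (n:ℝ) ≠ 0 := ne_of_gt hn0
  have hσne : σ ≠ 0 := ne_of_gt hσ
  have hτne : τ ≠ 0 := ne_of_gt hτ
  have hc1 : (0:ℝ) < 1 + μ * σ := by nlinarith
  have hc2 : (0:ℝ) < 1 + μ * τ := by nlinarith
  -- κ facts
  have hκ1 : L11 * σ ≤ κ := hκ ▸ le_max_right _ _
  have hκpos : (0:ℝ) < κ := lt_of_lt_of_le (mul_pos hL11 hσ) hκ1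
  have hκne : κ ≠ 0 := ne_of_gt hκpos
  have hκ2 : L12 ^ 2 * (σ * τ * (n:ℝ)) ≤ κ ^ 2 := by
    have h0 : (0:ℝ) ≤ σ * τ * (n:ℝ) := by positivity
    have h1 : L12 * Real.sqrt (σ * τ * (n:ℝ)) ≤ κ := hκ ▸ le_max_left _ _
    have h2 : (0:ℝ) ≤ L12 * Real.sqrt (σ * τ * (n:ℝ)) := by positivity
    nlinarith [Real.sq_sqrt h0, Real.sqrt_nonneg (σ * τ * (n:ℝ))]
  -- θ facts
  have hθ1 : 1 ≤ θ * (1 + μ * σ) := by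
    have h := le_max_left (1 / (1 + μ * σ))
      ((1 + ((n : ℝ) - 1) * μ * τ / (n : ℝ)) / (1 + μ * τ))
    rw [← hθ, div_le_iff₀ hc1] at h
    linarith
  have hθ2 : ((n:ℝ) - 1) * (1 + μ * τ) + 1 ≤ θ * ((n:ℝ) * (1 + μ * τ)) := by
    have h := le_max_right (1 / (1 + μ * σ))
      ((1 + ((n : ℝ) - 1) * μ * τ / (n : ℝ)) / (1 + μ * τ))
    rw [← hθ, div_le_iff₀ hc2] at h
    have h' := mul_le_mul_of_nonneg_right h (le_of_lt hn0)
    have hcan : ((n:ℝ) - 1) * μ * τ / (n:ℝ) * (n:ℝ) = ((n:ℝ) - 1) * μ * τ := by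
      field_simp
    nlinarith [h', hcan]
  have hθ0 : (0:ℝ) < θ := by
    have h := le_max_left (1 / (1 + μ * σ))
      ((1 + ((n : ℝ) - 1) * μ * τ / (n : ℝ)) / (1 + μ * τ))
    rw [← hθ] at h
    have : (0:ℝ) < 1 / (1 + μ * σ) := by positivity
    linarith
  have hθ3 : θ ≤ 1 := by
    rw [hθ]
    apply max_le
    · rw [div_le_one hc1]; nlinarith
    · rw [div_le_one hc2]
      have : ((n:ℝ) - 1) * μ * τ / (n:ℝ) ≤ μ * τ := by
        rw [div_le_iff₀ hn0]; nlinarith [mul_pos hμ hτ]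
      linarith
  -- update-coordinate lemmas
  have V1 : ∀ (w : E) (i : Fin n),
      Gw w (updCoord δk i (δhat i)) - Gw w δk = gw i w (δhat i) - gw i w (δk i) := by
    intro w i
    rw [hGw, hGw, ← Finset.sum_sub_distrib]
    rw [Finset.sum_eq_single i]
    · simp [updCoord]
    · intro j _ hj
      simp [updCoord, Function.update_of_ne hj]
    · intro h; exact absurd (Finset.mem_univ i) h
  have V2 : ∑ i, (Gw wk1 (updCoord δk i (δhat i)) - q i)
      = (n:ℝ) • (Gw wk1 δhat - Gw wk δk) := by
    have step : ∀ i, Gw wk1 (updCoord δk i (δhat i)) - q i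
        = (n:ℝ) • (gw i wk1 (δhat i) - gw i wk1 (δk i)) + (Gw wk1 δk - Gw wk δk) := by
      intro i
      have h' : Gw wk1 (updCoord δk i (δhat i))
          = gw i wk1 (δhat i) - gw i wk1 (δk i) + Gw wk1 δk := sub_eq_iff_eq_add.mp (V1 wk1 i)
      rw [hqi i, h']
      module
    rw [Finset.sum_congr rfl (fun i _ => step i), Finset.sum_add_distrib,
      Finset.sum_const, ← Finset.smul_sum, Finset.sum_sub_distrib, ← hGw, ← hGw,
      Finset.card_univ, Fintype.card_fin]
    have : (n : ℕ) • (Gw wk1 δk - Gw wk δk) = (n:ℝ) • (Gw wk1 δk - Gw wk δk) :=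
      (Nat.cast_smul_eq_nsmul ℝ n _).symm
    rw [this]
    module
  have E1 : (1/(n:ℝ)) * (∑ i, ⟪wstar - wk1, Gw wk1 (updCoord δk i (δhat i)) - q i⟫)
      = ⟪wstar - wk1, Gw wk1 δhat - Gw wk δk⟫ := by
    rw [← inner_sum, V2, real_inner_smul_right]
    field_simp
  -- norm-square sum lemmas
  have sumsq : ∀ (x y : PiLp 2 Fd), ∑ i, ‖x i - y i‖^2 = ‖x - y‖^2 := by
    intro x y
    rw [PiLp.norm_sq_eq_of_L2]
    simp
  have N1 : ∀ i, ‖δstar - updCoord δk i (δhat i)‖^2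
      = ‖δstar - δk‖^2 - ‖δstar i - δk i‖^2 + ‖δstar i - δhat i‖^2 := by
    intro i
    rw [← sumsq δstar δk, PiLp.norm_sq_eq_of_L2]
    have key : ∑ j, (‖(δstar - updCoord δk i (δhat i)) j‖^2 - ‖δstar j - δk j‖^2)
        = ‖δstar i - δhat i‖^2 - ‖δstar i - δk i‖^2 := by
      rw [Finset.sum_eq_single i]
      · simp [updCoord]
      · intro j _ hj
        simp [updCoord, Function.update_of_ne hj]
      · intro h; exact absurd (Finset.mem_univ i) h
    rw [Finset.sum_sub_distrib] at key
    linarith [key]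
  have sumN1 : ∑ i, ‖δstar - updCoord δk i (δhat i)‖^2
      = ((n:ℝ) - 1) * ‖δstar - δk‖^2 + ‖δstar - δhat‖^2 := by
    rw [Finset.sum_congr rfl (fun i _ => N1 i)]
    rw [Finset.sum_add_distrib, Finset.sum_sub_distrib, Finset.sum_const,
      Finset.card_univ, Fintype.card_fin, sumsq, sumsq, nsmul_eq_mul]
    ring
  have sumN2 : ∑ i, ‖updCoord δk i (δhat i) - δk‖^2 = ‖δhat - δk‖^2 := by
    have N2 : ∀ i, ‖updCoord δk i (δhat i) - δk‖^2 = ‖δhat i - δk i‖^2 := by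
      intro i
      rw [PiLp.norm_sq_eq_of_L2]
      rw [Finset.sum_eq_single i]
      · simp [updCoord]
      · intro j _ hj
        simp [updCoord, Function.update_of_ne hj]
      · intro h; exact absurd (Finset.mem_univ i) h
    rw [Finset.sum_congr rfl (fun i _ => N2 i), sumsq]
  -- extract updates
  obtain ⟨γf, hγf, hweq⟩ := hupw
  obtain ⟨γg, hγg, hdeq⟩ := hupd
  have e1 : γf + Gw wk1 δhat
      = Gw wk1 δhat - Gw wk δk - θ • (Gw wk δk - qk) - σ⁻¹ • (wk1 - wk) := by
    rw [show γf + Gw wk1 δhat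
        = (γf + σ⁻¹ • (wk1 - wk) + Gw wk δk + θ • (Gw wk δk - qk))
          + (Gw wk1 δhat - Gw wk δk - θ • (Gw wk δk - qk) - σ⁻¹ • (wk1 - wk)) from by
      abel, ← hweq, zero_add]
  have e2 : γg - Gd wk1 δhat = -(τ⁻¹ • (δhat - δk)) := by
    rw [show γg - Gd wk1 δhat
        = (γg + τ⁻¹ • (δhat - δk) - Gd wk1 δhat) + (-(τ⁻¹ • (δhat - δk))) from by
      abel, ← hdeq, zero_add]
  -- instantiate MVI
  have hM := hMVI wk1 δhat γf γg hγf hγg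
  rw [e1, e2] at hM
  have i1 : ⟪Gw wk1 δhat - Gw wk δk - θ • (Gw wk δk - qk) - σ⁻¹ • (wk1 - wk),
      wk1 - wstar⟫
      = ⟪Gw wk1 δhat - Gw wk δk, wk1 - wstar⟫ - θ * ⟪Gw wk δk - qk, wk1 - wstar⟫
        - σ⁻¹ * ⟪wk1 - wk, wk1 - wstar⟫ := by
    simp only [inner_sub_left, real_inner_smul_left]
  have i2 : ⟪-(τ⁻¹ • (δhat - δk)), δhat - δstar⟫
      = -(τ⁻¹ * ⟪δhat - δk, δhat - δstar⟫) := by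
    simp only [inner_neg_left, real_inner_smul_left]
  rw [i1, i2] at hM
  -- polarization identities
  have p1 : σ⁻¹ * ⟪wk1 - wk, wk1 - wstar⟫
      = σ⁻¹ * ((‖wk1 - wk‖^2 + ‖wstar - wk1‖^2 - ‖wstar - wk‖^2)/2) := by
    have h := norm_sub_sq_real (wk1 - wk) (wk1 - wstar)
    rw [show (wk1 - wk) - (wk1 - wstar) = wstar - wk from by abel] at h
    rw [show ‖wk1 - wstar‖ = ‖wstar - wk1‖ from norm_sub_rev _ _] at h
    have : ⟪wk1 - wk, wk1 - wstar⟫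
        = (‖wk1 - wk‖^2 + ‖wstar - wk1‖^2 - ‖wstar - wk‖^2)/2 := by linarith
    rw [this]
  have p2 : τ⁻¹ * ⟪δhat - δk, δhat - δstar⟫
      = τ⁻¹ * ((‖δhat - δk‖^2 + ‖δstar - δhat‖^2 - ‖δstar - δk‖^2)/2) := by
    have h := norm_sub_sq_real (δhat - δk) (δhat - δstar)
    rw [show (δhat - δk) - (δhat - δstar) = δstar - δk from by abel] at h
    rw [show ‖δhat - δstar‖ = ‖δstar - δhat‖ from norm_sub_rev _ _] at h
    have : ⟪δhat - δk, δhat - δstar⟫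
        = (‖δhat - δk‖^2 + ‖δstar - δhat‖^2 - ‖δstar - δk‖^2)/2 := by linarith
    rw [this]
  rw [p1, p2] at hM
  rw [show ‖wk1 - wstar‖ = ‖wstar - wk1‖ from norm_sub_rev _ _,
    show ‖δhat - δstar‖ = ‖δstar - δhat‖ from norm_sub_rev _ _] at hM
  -- decompose the extrapolation inner product
  have t1' : θ * ⟪Gw wk δk - qk, wk1 - wstar⟫
      = θ * (-⟪wstar - wk, Gw wk δk - qk⟫ + ⟪Gw wk δk - qk, wk1 - wk⟫) := by
    congr 1
    rw [show wk1 - wstar = (wk1 - wk) - (wstar - wk) from by abel, inner_sub_right,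
      real_inner_comm (wstar - wk)]
    ring
  rw [t1'] at hM
  -- relate goal's first sum to S'
  have s1 : ⟪wstar - wk1, Gw wk1 δhat - Gw wk δk⟫
      = -⟪Gw wk1 δhat - Gw wk δk, wk1 - wstar⟫ := by
    rw [real_inner_comm, show wstar - wk1 = -(wk1 - wstar) from by abel, inner_neg_right]
  -- Lipschitz bound on the extrapolation term
  have F5 : ‖Gw wk δk - qk‖ ≤ L11 * ‖wk - wkm1‖ + (n:ℝ) * (L12 * ‖δk - δkm1‖) := by
    have hvec : Gw wk δk - qk
        = (Gw wk δkm1 - Gw wkm1 δkm1) + (n:ℝ) • (Gw wk δk - Gw wk δkm1) := by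
      rw [hq]; module
    rw [hvec]
    calc ‖(Gw wk δkm1 - Gw wkm1 δkm1) + (n:ℝ) • (Gw wk δk - Gw wk δkm1)‖
        ≤ ‖Gw wk δkm1 - Gw wkm1 δkm1‖ + ‖(n:ℝ) • (Gw wk δk - Gw wk δkm1)‖ :=
          norm_add_le _ _
      _ ≤ L11 * ‖wk - wkm1‖ + (n:ℝ) * (L12 * ‖δk - δkm1‖) := by
          rw [norm_smul, Real.norm_eq_abs, abs_of_pos hn0]
          have h1 := hLw wk wkm1 δkm1
          have h2 := hLwd wk δk δkm1
          nlinarith [h2, hn0]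
  have F8 : -⟪Gw wk δk - qk, wk1 - wk⟫ ≤ ‖Gw wk δk - qk‖ * ‖wk1 - wk‖ := by
    have h := abs_real_inner_le_norm (Gw wk δk - qk) (wk1 - wk)
    have h2 := neg_abs_le (⟪Gw wk δk - qk, wk1 - wk⟫ : ℝ)
    linarith
  have F8' : θ * (-⟪Gw wk δk - qk, wk1 - wk⟫)
      ≤ θ * (‖Gw wk δk - qk‖ * ‖wk1 - wk‖) := mul_le_mul_of_nonneg_left F8 hθ0.le
  -- Young inequalities
  have c2 : L11 * (‖wk - wkm1‖ * ‖wk1 - wk‖)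
      ≤ κ/(2*σ) * ‖wk - wkm1‖^2 + σ*L11^2/(2*κ) * ‖wk1 - wk‖^2 := by
    rw [← sub_nonneg]
    have h : κ/(2*σ) * ‖wk - wkm1‖^2 + σ*L11^2/(2*κ) * ‖wk1 - wk‖^2
        - L11 * (‖wk - wkm1‖ * ‖wk1 - wk‖)
        = (κ*‖wk - wkm1‖ - σ*L11*‖wk1 - wk‖)^2 / (2*σ*κ) := by
      field_simp
      ring
    rw [h]; positivity
  have c3 : (n:ℝ) * (L12 * (‖δk - δkm1‖ * ‖wk1 - wk‖))
      ≤ (n:ℝ)*κ/(2*τ) * ‖δk - δkm1‖^2 + (n:ℝ)*τ*L12^2/(2*κ) * ‖wk1 - wk‖^2 := by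
    rw [← sub_nonneg]
    have h : (n:ℝ)*κ/(2*τ) * ‖δk - δkm1‖^2 + (n:ℝ)*τ*L12^2/(2*κ) * ‖wk1 - wk‖^2
        - (n:ℝ) * (L12 * (‖δk - δkm1‖ * ‖wk1 - wk‖))
        = (n:ℝ) * ((κ*‖δk - δkm1‖ - τ*L12*‖wk1 - wk‖)^2 / (2*τ*κ)) := by
      field_simp
      ring
    rw [h]; positivity
  have c4a : σ*L11^2/(2*κ) ≤ κ/(2*σ) := by
    rw [div_le_div_iff₀ (by positivity) (by positivity)]
    have hsq : (L11*σ)^2 ≤ κ^2 := pow_le_pow_left₀ (by positivity) hκ1 2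
    nlinarith [hsq]
  have c4b : (n:ℝ)*τ*L12^2/(2*κ) ≤ κ/(2*σ) := by
    rw [div_le_div_iff₀ (by positivity) (by positivity)]
    linarith [hκ2]
  have c5 : θ * (σ*L11^2/(2*κ) * ‖wk1 - wk‖^2) ≤ κ/(2*σ) * ‖wk1 - wk‖^2 := by
    have hA : (0:ℝ) ≤ σ*L11^2/(2*κ) * ‖wk1 - wk‖^2 := by positivity
    have h1 : σ*L11^2/(2*κ) * ‖wk1 - wk‖^2 ≤ κ/(2*σ) * ‖wk1 - wk‖^2 :=
      mul_le_mul_of_nonneg_right c4a (sq_nonneg _)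
    have h2 := mul_le_mul_of_nonneg_right hθ3 hA
    rw [one_mul] at h2
    exact le_trans h2 h1
  have c6 : θ * ((n:ℝ)*τ*L12^2/(2*κ) * ‖wk1 - wk‖^2) ≤ κ/(2*σ) * ‖wk1 - wk‖^2 := by
    have hA : (0:ℝ) ≤ (n:ℝ)*τ*L12^2/(2*κ) * ‖wk1 - wk‖^2 := by positivity
    have h1 : (n:ℝ)*τ*L12^2/(2*κ) * ‖wk1 - wk‖^2 ≤ κ/(2*σ) * ‖wk1 - wk‖^2 :=
      mul_le_mul_of_nonneg_right c4b (sq_nonneg _)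
    have h2 := mul_le_mul_of_nonneg_right hθ3 hA
    rw [one_mul] at h2
    exact le_trans h2 h1
  have hC : θ * (‖Gw wk δk - qk‖ * ‖wk1 - wk‖)
      ≤ θ * (κ/(2*σ)) * ‖wk - wkm1‖^2 + θ * ((n:ℝ)*κ/(2*τ)) * ‖δk - δkm1‖^2
        + (κ/σ) * ‖wk1 - wk‖^2 := by
    have b1 : ‖Gw wk δk - qk‖ * ‖wk1 - wk‖
        ≤ (L11 * ‖wk - wkm1‖ + (n:ℝ) * (L12 * ‖δk - δkm1‖)) * ‖wk1 - wk‖ :=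
      mul_le_mul_of_nonneg_right F5 (norm_nonneg _)
    have b2 := mul_le_mul_of_nonneg_left b1 hθ0.le
    have b3 := mul_le_mul_of_nonneg_left c2 hθ0.le
    have b4 := mul_le_mul_of_nonneg_left c3 hθ0.le
    have id_b1 : θ * ((L11 * ‖wk - wkm1‖ + (n:ℝ) * (L12 * ‖δk - δkm1‖)) * ‖wk1 - wk‖)
        = θ * (L11 * (‖wk - wkm1‖ * ‖wk1 - wk‖))
          + θ * ((n:ℝ) * (L12 * (‖δk - δkm1‖ * ‖wk1 - wk‖))) := by ring
    have id_b3 : θ * (κ/(2*σ) * ‖wk - wkm1‖^2 + σ*L11^2/(2*κ) * ‖wk1 - wk‖^2)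
        = θ * (κ/(2*σ)) * ‖wk - wkm1‖^2 + θ * (σ*L11^2/(2*κ) * ‖wk1 - wk‖^2) := by ring
    have id_b4 : θ * ((n:ℝ)*κ/(2*τ) * ‖δk - δkm1‖^2 + (n:ℝ)*τ*L12^2/(2*κ) * ‖wk1 - wk‖^2)
        = θ * ((n:ℝ)*κ/(2*τ)) * ‖δk - δkm1‖^2
          + θ * ((n:ℝ)*τ*L12^2/(2*κ) * ‖wk1 - wk‖^2) := by ring
    have id_c : κ/(2*σ) * ‖wk1 - wk‖^2 + κ/(2*σ) * ‖wk1 - wk‖^2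
        = (κ/σ) * ‖wk1 - wk‖^2 := by ring
    linarith [b2, b3, b4, c5, c6, id_b1, id_b3, id_b4, id_c]
  -- coefficient inequalities
  have H3 : 1/(2*σ) * ‖wstar - wk‖^2 ≤ θ * ((1+μ*σ)/(2*σ)) * ‖wstar - wk‖^2 := by
    have key : (0:ℝ) ≤ (θ*(1+μ*σ) - 1)/(2*σ) * ‖wstar - wk‖^2 :=
      mul_nonneg (div_nonneg (by linarith) (by linarith)) (sq_nonneg _)
    have id3 : (θ*(1+μ*σ) - 1)/(2*σ) * ‖wstar - wk‖^2
        = θ * ((1+μ*σ)/(2*σ)) * ‖wstar - wk‖^2 - 1/(2*σ) * ‖wstar - wk‖^2 := by ring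
    linarith [key, id3]
  have H4 : 1/(2*τ) * ‖δstar - δk‖^2 + ((1+μ*τ)/(2*τ)) * (((n:ℝ)-1) * ‖δstar - δk‖^2)
      ≤ θ * ((n:ℝ)*(1+μ*τ)/(2*τ)) * ‖δstar - δk‖^2 := by
    have key : (0:ℝ) ≤ (θ*((n:ℝ)*(1+μ*τ)) - (((n:ℝ)-1)*(1+μ*τ) + 1))/(2*τ)
        * ‖δstar - δk‖^2 :=
      mul_nonneg (div_nonneg (by linarith [hθ2]) (by linarith)) (sq_nonneg _)
    have id4 : (θ*((n:ℝ)*(1+μ*τ)) - (((n:ℝ)-1)*(1+μ*τ) + 1))/(2*τ) * ‖δstar - δk‖^2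
        = θ * ((n:ℝ)*(1+μ*τ)/(2*τ)) * ‖δstar - δk‖^2 - 1/(2*τ) * ‖δstar - δk‖^2
          - ((1+μ*τ)/(2*τ)) * (((n:ℝ)-1) * ‖δstar - δk‖^2) := by ring
    linarith [key, id4]
  have H5 : (κ/σ) * ‖wk1 - wk‖^2 + κ/(2*σ) * ‖wk1 - wk‖^2
      ≤ 1/(2*σ) * ‖wk1 - wk‖^2 := by
    have key : (0:ℝ) ≤ (1 - 3*κ)/(2*σ) * ‖wk1 - wk‖^2 :=
      mul_nonneg (div_nonneg (by linarith) (by linarith)) (sq_nonneg _)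
    have id5 : (1 - 3*κ)/(2*σ) * ‖wk1 - wk‖^2
        = 1/(2*σ) * ‖wk1 - wk‖^2 - (κ/σ) * ‖wk1 - wk‖^2 - κ/(2*σ) * ‖wk1 - wk‖^2 := by
      ring
    linarith [key, id5]
  have H6 : κ/(2*τ) * ‖δhat - δk‖^2 ≤ 1/(2*τ) * ‖δhat - δk‖^2 := by
    have key : (0:ℝ) ≤ (1 - κ)/(2*τ) * ‖δhat - δk‖^2 :=
      mul_nonneg (div_nonneg (by linarith) (by linarith)) (sq_nonneg _)
    have id6 : (1 - κ)/(2*τ) * ‖δhat - δk‖^2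
        = 1/(2*τ) * ‖δhat - δk‖^2 - κ/(2*τ) * ‖δhat - δk‖^2 := by ring
    linarith [key, id6]
  -- denominator-cancellation identities
  have Hσ1 : (1+μ*σ)/(2*σ) * ‖wstar - wk1‖^2
      = μ/2 * ‖wstar - wk1‖^2 + 1/(2*σ) * ‖wstar - wk1‖^2 := by
    field_simp; ring
  have Hτ1 : (1+μ*τ)/(2*τ) * ‖δstar - δhat‖^2
      = μ/2 * ‖δstar - δhat‖^2 + 1/(2*τ) * ‖δstar - δhat‖^2 := by
    field_simp; ring
  have E2 : ((n : ℝ) * (1 + μ * τ) / (2 * τ)) *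
        ((1 / (n : ℝ)) * ∑ i, ‖δstar - updCoord δk i (δhat i)‖ ^ 2)
      = ((1+μ*τ)/(2*τ)) * (((n:ℝ)-1) * ‖δstar - δk‖^2)
        + ((1+μ*τ)/(2*τ)) * ‖δstar - δhat‖^2 := by
    rw [sumN1]; field_simp
  have E3 : ((n : ℝ) * κ / (2 * τ)) *
        ((1 / (n : ℝ)) * ∑ i, ‖updCoord δk i (δhat i) - δk‖ ^ 2)
      = κ/(2*τ) * ‖δhat - δk‖^2 := by
    rw [sumN2]; field_simp
  -- final assembly
  rw [ge_iff_le, E1, s1, E2, E3]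
  have hM2 : ⟪Gw wk1 δhat - Gw wk δk, wk1 - wstar⟫
      + θ * ⟪wstar - wk, Gw wk δk - qk⟫ - θ * ⟪Gw wk δk - qk, wk1 - wk⟫
      - 1/(2*σ) * ‖wk1 - wk‖^2 - 1/(2*σ) * ‖wstar - wk1‖^2 + 1/(2*σ) * ‖wstar - wk‖^2
      - 1/(2*τ) * ‖δhat - δk‖^2 - 1/(2*τ) * ‖δstar - δhat‖^2 + 1/(2*τ) * ‖δstar - δk‖^2
      ≥ μ/2 * ‖wstar - wk1‖^2 + μ/2 * ‖δstar - δhat‖^2 := by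
    have expand : θ * (-⟪wstar - wk, Gw wk δk - qk⟫ + ⟪Gw wk δk - qk, wk1 - wk⟫)
        = -(θ * ⟪wstar - wk, Gw wk δk - qk⟫) + θ * ⟪Gw wk δk - qk, wk1 - wk⟫ := by ring
    rw [expand] at hM
    have expσ : σ⁻¹ * ((‖wk1 - wk‖^2 + ‖wstar - wk1‖^2 - ‖wstar - wk‖^2)/2)
        = 1/(2*σ) * ‖wk1 - wk‖^2 + 1/(2*σ) * ‖wstar - wk1‖^2
          - 1/(2*σ) * ‖wstar - wk‖^2 := by ring
    have expτ : τ⁻¹ * ((‖δhat - δk‖^2 + ‖δstar - δhat‖^2 - ‖δstar - δk‖^2)/2)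
        = 1/(2*τ) * ‖δhat - δk‖^2 + 1/(2*τ) * ‖δstar - δhat‖^2
          - 1/(2*τ) * ‖δstar - δk‖^2 := by ring
    rw [expσ, expτ] at hM
    linarith [hM]
  have F8'' : θ * (-⟪Gw wk δk - qk, wk1 - wk⟫)
      = -(θ * ⟪Gw wk δk - qk, wk1 - wk⟫) := by ring
  rw [F8''] at F8'
  -- abstract composite coefficients so the final linear problem is small
  set T0 := (⟪wstar - wk, Gw wk δk - qk⟫ : ℝ)
  set TA := (⟪Gw wk δk - qk, wk1 - wk⟫ : ℝ)
  set Sp := (⟪Gw wk1 δhat - Gw wk δk, wk1 - wstar⟫ : ℝ)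
  set NX := ‖Gw wk δk - qk‖ * ‖wk1 - wk‖
  set a1 := (1 + μ * σ) / (2 * σ)
  set b1 := (1 + μ * τ) / (2 * τ)
  set d1 := (n:ℝ) * (1 + μ * τ) / (2 * τ)
  set sσ := 1 / (2 * σ)
  set sτ := 1 / (2 * τ)
  set cσ := κ / (2 * σ)
  set cτ := (n:ℝ) * κ / (2 * τ)
  set cs2 := κ / σ
  set x1 := ‖wstar - wk‖^2
  set x2 := ‖wstar - wk1‖^2
  set x3 := ‖δstar - δk‖^2
  set x4 := ‖δstar - δhat‖^2
  set x5 := ‖wk1 - wk‖^2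
  set x6 := ‖wk - wkm1‖^2
  set x7 := ‖δk - δkm1‖^2
  set x8 := ‖δhat - δk‖^2
  linarith [hM2, hC, H3, H4, H5, H6, Hσ1, Hτ1, F8']
end

section
/- Expected summability of squared successive differences for SSI-HG under the weak MVI assumption (equations (thm1_5)–(thm1_6) in the proof of Theorem 1). Suppose (w*, δ*) is a solution of the weak MVI with parameter ρ > 0, let θ = 1, let σ, τ > 0 satisfy κ := max{L12·(στn)^{1/2}, L11·σ} < min{1/3 − ρ(σ^{−1} + 4L11²σ), 1 − ρ(τ^{−1} + 12nL12²τ)}. Let (w^k, δ^k) be an SSI-HG trajectory with these parameters and write E[·] for the average over uniformly random i.i.d. index histories. Then for every K ≥ 1: ((1 − 3κ − 3ρ(σ^{−1} + 4L11²σ))/(2σ)) ∑_{k=0}^{K−1} E[‖w^{k+1} − w^k‖²] + (n(1 − κ − ρ(τ^{−1} + 12nL12²τ))/(2τ)) ∑_{k=0}^{K−1} E[‖δ^{k+1} − δ^k‖²] ≤ (1/(2σ))‖w* − w^0‖² + (n/(2τ))‖δ* − δ^0‖². In particular, (1/K)∑_{k=0}^{K−1} E[‖w^{k+1} − w^k‖²]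 = O(1/K) and (1/K)∑_{k=0}^{K−1} E[‖δ^{k+1} − δ^k‖²] = O(1/K). -/
open scoped RealInnerProductSpace

/-- Given the initial point `w0` and the family `W` (where `W s` is the iterate
`w^{|s|+1}` produced after the (reversed) index history `s`), `wat w0 W s` is the iterate
`w^{|s|}` at the beginning of the step with (reversed) history `s`; it depends only on
the indices drawn strictly before the last one.  In particular `wat w0 W [] = w0 = w^0`,
which also encodes the convention `w^{-1} = w^0` via `List.tail [] = []`. -/
def wat {n : ℕ} {E : Type*} (w0 : E) (W : List (Fin n) → E) : List (Fin n) → E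
  | [] => w0
  | _ :: t => W t

/-!
Along the tree of index histories, the weak MVI at the point `(w^{k+1}, δ̂^{k+1})` in which every
block is updated, combined with the three-point identity, bounds the weighted distance to
`(w*, δ*)` up to the drift `⟨𝔼_k c^{k+1} - c^k, w^{k+1} - w*⟩`, where `c^k` is the hybrid-gradient
correction. By block separability of `φ`, the mean of the next correction over the drawn index is
`∇_w φ(w^{k+1}, δ̂^{k+1}) - ∇_w φ(w^k, δ^k)`, so the drift telescopes once `-⟨c^k, w^k - w*⟩` is put
into the Lyapunov function. The Lipschitz bounds control `c^k` by the previous step, and the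
condition on `κ` lets that lag be paid by terms of the Lyapunov function itself, which is then
nonnegative and decreases in conditional expectation by the summand of the claimed bound.
-/

open Finset
open scoped BigOperators

theorem two_mul_real_inner_sub_sub {E : Type*} [NormedAddCommGroup E] [InnerProductSpace ℝ E]
    (a b c : E) : 2 * ⟪a - b, a - c⟫ = ‖a - b‖ ^ 2 + ‖a - c‖ ^ 2 - ‖b - c‖ ^ 2 := by
  have h := norm_sub_sq_real (a - c) (a - b)
  rw [show a - c - (a - b) = b - c by abel, real_inner_comm] at h
  linarith

theorem sq_add_add_add_le (a b c d : ℝ) :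
    (a + b + c + d) ^ 2 ≤ 3 * a ^ 2 + 6 * b ^ 2 + 6 * c ^ 2 + 3 * d ^ 2 := by
  nlinarith [sq_nonneg (a - 2 * b), sq_nonneg (a - 2 * c), sq_nonneg (a - d),
    sq_nonneg (b - c), sq_nonneg (2 * b - d), sq_nonneg (2 * c - d)]

theorem sum_sum_sub_sum_of_eq_off_diag {ι : Type*} [Fintype ι] {α : ι → Type*} {M : Type*}
    [AddCommGroup M] (g : ∀ j, α j → M) (x : ∀ j, α j) (y : ι → ∀ j, α j)
    (hy : ∀ i j, j ≠ i → y i j = x j) :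
    ∑ i, (∑ j, g j (y i j) - ∑ j, g j (x j)) = ∑ j, g j (y j j) - ∑ j, g j (x j) := by
  have hsingle : ∀ i, ∑ j, g j (y i j) - ∑ j, g j (x j) = g i (y i i) - g i (x i) := fun i => by
    rw [← sum_sub_distrib]
    exact sum_eq_single i (fun j _ hj => by rw [hy i j hj, sub_self]) (by simp)
  simp only [hsingle, sum_sub_distrib]

/-- Mean over the `n ^ k` index histories of length `k`, stored most recent index first. -/
noncomputable def histMean (n k : ℕ) (F : List (Fin n) → ℝ) : ℝ :=
  𝔼 s : Fin k → Fin n, F (List.ofFn s)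

theorem histMean_eq (n k : ℕ) (F : List (Fin n) → ℝ) :
    histMean n k F = ((n : ℝ) ^ k)⁻¹ * ∑ s : Fin k → Fin n, F (List.ofFn s) := by
  rw [histMean, Fintype.expect_eq_sum_div_card, Fintype.card_fun, Fintype.card_fin,
    Fintype.card_fin, div_eq_inv_mul, Nat.cast_pow]

theorem histMean_zero (n : ℕ) (F : List (Fin n) → ℝ) : histMean n 0 F = F [] := by
  simp [histMean]

theorem histMean_succ (n k : ℕ) (F : List (Fin n) → ℝ) :
    histMean n (k + 1) F = histMean n k (fun s => 𝔼 i, F (i :: s)) := by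
  rw [histMean, histMean, expect_comm,
    ← Fintype.expect_equiv (Fin.consEquiv fun _ => Fin n) (fun p => F (p.1 :: List.ofFn p.2))
      _ (fun p => by simp [Fin.consEquiv, List.ofFn_succ]),
    ← univ_product_univ, expect_product]

theorem histMean_expect_cons (n k : ℕ) (F : List (Fin n) → ℝ) :
    histMean n k (fun s => 𝔼 i, F (i :: s)) =
      ((n : ℝ) ^ (k + 1))⁻¹ * ∑ s : Fin (k + 1) → Fin n, F (List.ofFn s) := by
  rw [← histMean_succ, histMean_eq]

theorem histMean_add_mul (n k : ℕ) (a b : ℝ) (F G : List (Fin n) → ℝ) :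
    histMean n k (fun s => a * F s + b * G s) = a * histMean n k F + b * histMean n k G := by
  simp only [histMean, expect_add_distrib, mul_expect]

theorem sum_histMean_le {n : ℕ} (Ψ g : List (Fin n) → ℝ)
    (hstep : ∀ s, 𝔼 i, Ψ (i :: s) + g s ≤ Ψ s) (hΨ : ∀ s, 0 ≤ Ψ s) (K : ℕ) :
    ∑ k ∈ range K, histMean n k g ≤ Ψ [] := by
  have hlevel : ∀ k, histMean n k g ≤ histMean n k Ψ - histMean n (k + 1) Ψ := fun k => by
    rw [histMean_succ, le_sub_iff_add_le', histMean, histMean, histMean, ← expect_add_distrib]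
    exact expect_le_expect fun _ _ => hstep _
  calc ∑ k ∈ range K, histMean n k g
      ≤ ∑ k ∈ range K, (histMean n k Ψ - histMean n (k + 1) Ψ) := sum_le_sum fun k _ => hlevel k
    _ = histMean n 0 Ψ - histMean n K Ψ := by
      rw [← neg_sub, ← sum_range_sub (fun k => histMean n k Ψ), ← sum_neg_distrib]
      simp
    _ ≤ Ψ [] := by
      rw [histMean_zero]
      linarith [show 0 ≤ histMean n K Ψ from expect_nonneg fun s _ => hΨ _]

theorem real_inner_le_mul_norm_sq_add {E : Type*} [NormedAddCommGroup E] [InnerProductSpace ℝ E]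
    {t : ℝ} (ht : 0 < t) (x y : E) : ⟪x, y⟫ ≤ t / 2 * ‖x‖ ^ 2 + ‖y‖ ^ 2 / (2 * t) := by
  have hsq : t / 2 * ‖x‖ ^ 2 + ‖y‖ ^ 2 / (2 * t) - ‖x‖ * ‖y‖ = (t * ‖x‖ - ‖y‖) ^ 2 / (2 * t) := by
    field_simp
    ring
  have h : 0 ≤ (t * ‖x‖ - ‖y‖) ^ 2 / (2 * t) := by positivity
  linarith [real_inner_le_norm x y]

theorem norm_sq_descent_of_inner_ge {E F : Type*} [NormedAddCommGroup E] [InnerProductSpace ℝ E]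
    [NormedAddCommGroup F] [InnerProductSpace ℝ F]
    {σ τ ρ : ℝ} {w w' wstar e : E} {δ δ' δstar : F}
    (h : ⟪e - σ⁻¹ • (w' - w), w' - wstar⟫ + ⟪-(τ⁻¹ • (δ' - δ)), δ' - δstar⟫ ≥
      -(ρ / 2) * (‖e - σ⁻¹ • (w' - w)‖ ^ 2 + ‖-(τ⁻¹ • (δ' - δ))‖ ^ 2)) :
    (‖w' - wstar‖ ^ 2 + ‖w' - w‖ ^ 2) / (2 * σ) + (‖δ' - δstar‖ ^ 2 + ‖δ' - δ‖ ^ 2) / (2 * τ) ≤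
      ‖w - wstar‖ ^ 2 / (2 * σ) + ‖δ - δstar‖ ^ 2 / (2 * τ) + ⟪e, w' - wstar⟫ +
        ρ / 2 * (‖e - σ⁻¹ • (w' - w)‖ ^ 2 + ‖δ' - δ‖ ^ 2 / τ ^ 2) := by
  have hw := two_mul_real_inner_sub_sub w' w wstar
  have hδ := two_mul_real_inner_sub_sub δ' δ δstar
  rw [inner_sub_left, inner_neg_left, real_inner_smul_left, real_inner_smul_left, norm_neg,
    norm_smul, mul_pow, Real.norm_eq_abs, sq_abs] at h
  linear_combination h - σ⁻¹ / 2 * hw - τ⁻¹ / 2 * hδ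

namespace SSIHG

theorem kappa_bounds {n : ℕ} {L11 L12 σ τ ρ κ : ℝ} (hL11 : 0 < L11) (hL12 : 0 < L12)
    (hσ : 0 < σ) (hτ : 0 < τ) (hρ : 0 ≤ ρ)
    (hκ : κ = max (L12 * Real.sqrt (σ * τ * (n : ℝ))) (L11 * σ))
    (hstep : κ < 1 / 3 - ρ * (σ⁻¹ + 4 * L11 ^ 2 * σ)) :
    0 < κ ∧ L11 * σ ≤ κ ∧ L12 ^ 2 * (σ * τ * n) ≤ κ ^ 2 ∧ κ ≤ 1 / 2 := by
  have hκW : L11 * σ ≤ κ := hκ ▸ le_max_right _ _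
  have hκD : L12 ^ 2 * (σ * τ * n) ≤ κ ^ 2 := by
    rw [← Real.sq_sqrt (by positivity : (0 : ℝ) ≤ σ * τ * n), ← mul_pow]
    exact pow_le_pow_left₀ (by positivity) (hκ ▸ le_max_left _ _) 2
  have : 0 ≤ ρ * (σ⁻¹ + 4 * L11 ^ 2 * σ) := by positivity
  exact ⟨(mul_pos hL11 hσ).trans_le hκW, hκW, hκD, by linarith⟩

section Correction

variable {n : ℕ} {E : Type*} [NormedAddCommGroup E] [NormedSpace ℝ E] {Fd : Fin n → Type*}

/-- The hybrid-gradient correction `θ (∇_w φ(w^k, δ^k) - q^k)` of SSI-HG for `θ = 1`,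
at the current iterate `(w, δ)` and the previous one `(wp, δp)`. -/
def correction (Gw : E → PiLp 2 Fd → E) (w wp : E) (δ δp : PiLp 2 Fd) : E :=
  (n : ℝ) • (Gw w δ - Gw w δp) + (Gw w δp - Gw wp δp)

theorem sub_sub_smul_eq_correction (Gw : E → PiLp 2 Fd → E) (w wp : E) (δ δp : PiLp 2 Fd) :
    Gw w δ - (Gw wp δp - ((n : ℝ) - 1) • (Gw w δ - Gw w δp)) = correction Gw w wp δ δp := by
  rw [correction]
  module

/-- The paper's `δ̂^{k+1}`: block `i` is taken from the update `δ' i` that draws index `i`. -/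
def fullUpdate (δ' : Fin n → PiLp 2 Fd) : PiLp 2 Fd :=
  WithLp.toLp 2 fun i => δ' i i

theorem sum_norm_sq_sub_of_eq_off_diag [∀ i, NormedAddCommGroup (Fd i)] {δ c : PiLp 2 Fd}
    {δ' : Fin n → PiLp 2 Fd} (hδ' : ∀ i j, j ≠ i → δ' i j = δ j) :
    ∑ i, (‖δ' i - c‖ ^ 2 - ‖δ - c‖ ^ 2) = ‖fullUpdate δ' - c‖ ^ 2 - ‖δ - c‖ ^ 2 := by
  simp only [PiLp.norm_sq_eq_of_L2, PiLp.sub_apply]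
  exact sum_sum_sub_sum_of_eq_off_diag (fun j v => ‖v - c j‖ ^ 2) δ (fun i => δ' i) hδ'

theorem mul_expect_norm_sq_sub_of_eq_off_diag [∀ i, NormedAddCommGroup (Fd i)] (hn : n ≠ 0)
    {δ c : PiLp 2 Fd} {δ' : Fin n → PiLp 2 Fd} (hδ' : ∀ i j, j ≠ i → δ' i j = δ j) :
    n * 𝔼 i, ‖δ' i - c‖ ^ 2 = (n - 1) * ‖δ - c‖ ^ 2 + ‖fullUpdate δ' - c‖ ^ 2 := by
  have hsum := sum_norm_sq_sub_of_eq_off_diag (c := c) hδ'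
  rw [sum_sub_distrib, sum_const, card_univ, Fintype.card_fin, nsmul_eq_mul] at hsum
  rw [Fintype.expect_eq_sum_div_card, Fintype.card_fin, mul_div_cancel₀ _ (Nat.cast_ne_zero.2 hn)]
  linarith

theorem sum_correction_of_eq_off_diag {Gw : E → PiLp 2 Fd → E} {gw : ∀ i, E → Fd i → E}
    (hGw : ∀ w δ, Gw w δ = ∑ i, gw i w (δ i)) (w w' : E) {δ : PiLp 2 Fd}
    {δ' : Fin n → PiLp 2 Fd} (hδ' : ∀ i j, j ≠ i → δ' i j = δ j) :
    ∑ i, correction Gw w' w (δ' i) δ = (n : ℝ) • (Gw w' (fullUpdate δ') - Gw w δ) := by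
  have hblocks : ∑ i, (Gw w' (δ' i) - Gw w' δ) = Gw w' (fullUpdate δ') - Gw w' δ := by
    simp only [hGw]
    exact sum_sum_sub_sum_of_eq_off_diag (fun j v => gw j w' v) δ (fun i => δ' i) hδ'
  simp only [correction, sum_add_distrib, ← smul_sum, hblocks, sum_const, card_univ,
    Fintype.card_fin, ← Nat.cast_smul_eq_nsmul ℝ]
  module

theorem norm_correction_sq_le [∀ i, NormedAddCommGroup (Fd i)] {Gw : E → PiLp 2 Fd → E}
    {L11 L12 : ℝ}
    (hLww : ∀ (w w' : E) (δ : PiLp 2 Fd), ‖Gw w δ - Gw w' δ‖ ≤ L11 * ‖w - w'‖)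
    (hLwd : ∀ (w : E) (δ δ' : PiLp 2 Fd), ‖Gw w δ - Gw w δ'‖ ≤ L12 * ‖δ - δ'‖)
    (w wp : E) (δ δp : PiLp 2 Fd) :
    ‖correction Gw w wp δ δp‖ ^ 2 ≤
      2 * ((n * L12) ^ 2 * ‖δ - δp‖ ^ 2 + L11 ^ 2 * ‖w - wp‖ ^ 2) := by
  have h : ‖correction Gw w wp δ δp‖ ≤ n * L12 * ‖δ - δp‖ + L11 * ‖w - wp‖ := by
    refine (norm_add_le _ _).trans (add_le_add ?_ (hLww _ _ _))
    rw [norm_smul, Real.norm_natCast, mul_assoc]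
    exact mul_le_mul_of_nonneg_left (hLwd _ _ _) n.cast_nonneg
  nlinarith [norm_nonneg (correction Gw w wp δ δp), sq_nonneg (n * L12 * ‖δ - δp‖ - L11 * ‖w - wp‖)]

theorem mul_norm_correction_sq_le [∀ i, NormedAddCommGroup (Fd i)] {Gw : E → PiLp 2 Fd → E}
    {L11 L12 σ τ κ : ℝ}
    (hLww : ∀ (w w' : E) (δ : PiLp 2 Fd), ‖Gw w δ - Gw w' δ‖ ≤ L11 * ‖w - w'‖)
    (hLwd : ∀ (w : E) (δ δ' : PiLp 2 Fd), ‖Gw w δ - Gw w δ'‖ ≤ L12 * ‖δ - δ'‖)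
    (hσ : 0 < σ) (hτ : 0 < τ) (hL11 : 0 ≤ L11) (hκW : L11 * σ ≤ κ)
    (hκD : L12 ^ 2 * (σ * τ * n) ≤ κ ^ 2) (w wp : E) (δ δp : PiLp 2 Fd) :
    σ * ‖correction Gw w wp δ δp‖ ^ 2 ≤
      2 * κ ^ 2 * (‖w - wp‖ ^ 2 / σ + n * ‖δ - δp‖ ^ 2 / τ) := by
  have hD : σ * (n * L12) ^ 2 ≤ κ ^ 2 * n / τ := by
    rw [le_div_iff₀ hτ]
    nlinarith [mul_le_mul_of_nonneg_left hκD (Nat.cast_nonneg (α := ℝ) n)]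
  have hW : σ * L11 ^ 2 ≤ κ ^ 2 / σ := by
    rw [le_div_iff₀ hσ]
    nlinarith [pow_le_pow_left₀ (by positivity) hκW 2]
  calc σ * ‖correction Gw w wp δ δp‖ ^ 2
      ≤ σ * (2 * ((n * L12) ^ 2 * ‖δ - δp‖ ^ 2 + L11 ^ 2 * ‖w - wp‖ ^ 2)) :=
        mul_le_mul_of_nonneg_left (norm_correction_sq_le hLww hLwd w wp δ δp) hσ.le
    _ = 2 * (σ * (n * L12) ^ 2 * ‖δ - δp‖ ^ 2 + σ * L11 ^ 2 * ‖w - wp‖ ^ 2) := by ring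
    _ ≤ 2 * (κ ^ 2 * n / τ * ‖δ - δp‖ ^ 2 + κ ^ 2 / σ * ‖w - wp‖ ^ 2) := by gcongr
    _ = 2 * κ ^ 2 * (‖w - wp‖ ^ 2 / σ + n * ‖δ - δp‖ ^ 2 / τ) := by ring

theorem norm_sq_drift_sub_le [∀ i, NormedAddCommGroup (Fd i)] {Gw : E → PiLp 2 Fd → E}
    {L11 L12 σ : ℝ}
    (hLww : ∀ (w w' : E) (δ : PiLp 2 Fd), ‖Gw w δ - Gw w' δ‖ ≤ L11 * ‖w - w'‖)
    (hLwd : ∀ (w : E) (δ δ' : PiLp 2 Fd), ‖Gw w δ - Gw w δ'‖ ≤ L12 * ‖δ - δ'‖) (hσ : 0 < σ)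
    (w w' c : E) (δ δ' : PiLp 2 Fd) :
    ‖Gw w' δ' - Gw w δ - c - σ⁻¹ • (w' - w)‖ ^ 2 ≤
      3 * (σ⁻¹ * ‖w' - w‖) ^ 2 + 6 * (L11 * ‖w' - w‖) ^ 2 + 6 * (L12 * ‖δ' - δ‖) ^ 2
        + 3 * ‖c‖ ^ 2 := by
  refine (pow_le_pow_left₀ (norm_nonneg _) ?_ 2).trans (sq_add_add_add_le _ _ _ _)
  rw [show Gw w' δ' - Gw w δ - c - σ⁻¹ • (w' - w) =
    -(σ⁻¹ • (w' - w)) + (Gw w' δ - Gw w δ) + (Gw w' δ' - Gw w' δ) - c by abel]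
  refine (norm_sub_le _ _).trans (add_le_add_left ((norm_add₃_le).trans
    (add_le_add_three (le_of_eq ?_) (hLww _ _ _) (hLwd _ _ _))) _)
  rw [norm_neg, norm_smul, Real.norm_of_nonneg (inv_nonneg.2 hσ.le)]

end Correction

section Lyapunov

variable {n : ℕ} {E : Type*} [NormedAddCommGroup E] [InnerProductSpace ℝ E] {Fd : Fin n → Type*}
  [∀ i, NormedAddCommGroup (Fd i)]

/-- Lyapunov function of SSI-HG at the iterate `(w, δ)` with predecessor `(wp, δp)`; the terms
in the lag `(w - wp, δ - δp)` pay for the correction, which looks one step back. -/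
noncomputable def lyapunov (Gw : E → PiLp 2 Fd → E) (σ τ ρ κ L11 L12 : ℝ) (wstar : E)
    (δstar : PiLp 2 Fd) (w wp : E) (δ δp : PiLp 2 Fd) : ℝ :=
  ‖w - wstar‖ ^ 2 / (2 * σ) + n * ‖δ - δstar‖ ^ 2 / (2 * τ)
    - ⟪correction Gw w wp δ δp, w - wstar⟫
    + (κ / (2 * σ) + 3 * ρ * L11 ^ 2) * ‖w - wp‖ ^ 2
    + (n * κ / (2 * τ) + 3 * ρ * (n * L12) ^ 2) * ‖δ - δp‖ ^ 2

theorem lyapunov_self (Gw : E → PiLp 2 Fd → E) (σ τ ρ κ L11 L12 : ℝ) (wstar : E)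
    (δstar : PiLp 2 Fd) (w : E) (δ : PiLp 2 Fd) :
    lyapunov Gw σ τ ρ κ L11 L12 wstar δstar w w δ δ =
      ‖w - wstar‖ ^ 2 / (2 * σ) + n * ‖δ - δstar‖ ^ 2 / (2 * τ) := by
  simp [lyapunov, correction]

theorem lyapunov_nonneg {Gw : E → PiLp 2 Fd → E} {σ τ ρ κ L11 L12 : ℝ}
    (hLww : ∀ (w w' : E) (δ : PiLp 2 Fd), ‖Gw w δ - Gw w' δ‖ ≤ L11 * ‖w - w'‖)
    (hLwd : ∀ (w : E) (δ δ' : PiLp 2 Fd), ‖Gw w δ - Gw w δ'‖ ≤ L12 * ‖δ - δ'‖)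
    (hσ : 0 < σ) (hτ : 0 < τ) (hρ : 0 ≤ ρ) (hL11 : 0 ≤ L11) (hκW : L11 * σ ≤ κ)
    (hκD : L12 ^ 2 * (σ * τ * n) ≤ κ ^ 2) (hκ : κ ≤ 1 / 2) (wstar : E) (δstar : PiLp 2 Fd)
    (w wp : E) (δ δp : PiLp 2 Fd) :
    0 ≤ lyapunov Gw σ τ ρ κ L11 L12 wstar δstar w wp δ δp := by
  have hcorr := mul_norm_correction_sq_le hLww hLwd hσ hτ hL11 hκW hκD w wp δ δp
  have hinner := real_inner_le_mul_norm_sq_add hσ (correction Gw w wp δ δp) (w - wstar)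
  have hκ0 : 0 ≤ κ := (mul_nonneg hL11 hσ.le).trans hκW
  have hlag : 0 ≤ ‖w - wp‖ ^ 2 / σ + n * ‖δ - δp‖ ^ 2 / τ := by positivity
  have hρlag : 0 ≤ 3 * ρ * L11 ^ 2 * ‖w - wp‖ ^ 2 + 3 * ρ * (n * L12) ^ 2 * ‖δ - δp‖ ^ 2 := by
    positivity
  have hδ : 0 ≤ n * ‖δ - δstar‖ ^ 2 / (2 * τ) := by positivity
  have hκlag : κ ^ 2 * (‖w - wp‖ ^ 2 / σ + n * ‖δ - δp‖ ^ 2 / τ) ≤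
      κ / 2 * (‖w - wp‖ ^ 2 / σ + n * ‖δ - δp‖ ^ 2 / τ) :=
    mul_le_mul_of_nonneg_right (by nlinarith) hlag
  rw [lyapunov]
  linear_combination hinner + hcorr / 2 + hρlag + hδ + hκlag

theorem descent_of_weak_minty [∀ i, InnerProductSpace ℝ (Fd i)] {Gw : E → PiLp 2 Fd → E}
    {Gd : E → PiLp 2 Fd → PiLp 2 Fd} {gd : ∀ i, E → Fd i → Fd i}
    (hGd : ∀ w δ i, Gd w δ i = gd i w (δ i)) {f : E → ℝ} {gi : ∀ i, Fd i → ℝ} {wstar : E}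
    {δstar : PiLp 2 Fd} {ρ : ℝ}
    (hMVI : ∀ (w : E) (δ : PiLp 2 Fd) (γf : E) (γg : PiLp 2 Fd),
      IsSubgradient f w γf → (∀ i, IsSubgradient (gi i) (δ i) (γg i)) →
      ⟪γf + Gw w δ, w - wstar⟫ + ⟪γg - Gd w δ, δ - δstar⟫ ≥
        -(ρ / 2) * (‖γf + Gw w δ‖ ^ 2 + ‖γg - Gd w δ‖ ^ 2))
    {σ τ : ℝ} {w w' c : E} {δ : PiLp 2 Fd} {δ' : Fin n → PiLp 2 Fd}
    (hw : ∃ γf, IsSubgradient f w' γf ∧ 0 = γf + σ⁻¹ • (w' - w) + Gw w δ + c)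
    (hδ : ∀ i, ∃ γ : Fd i, IsSubgradient (gi i) (δ' i i) γ ∧
      (0 : Fd i) = γ + τ⁻¹ • (δ' i i - δ i) - gd i w' (δ' i i)) :
    (‖w' - wstar‖ ^ 2 + ‖w' - w‖ ^ 2) / (2 * σ)
        + (‖fullUpdate δ' - δstar‖ ^ 2 + ‖fullUpdate δ' - δ‖ ^ 2) / (2 * τ) ≤
      ‖w - wstar‖ ^ 2 / (2 * σ) + ‖δ - δstar‖ ^ 2 / (2 * τ)
        + ⟪Gw w' (fullUpdate δ') - Gw w δ - c, w' - wstar⟫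
        + ρ / 2 * (‖Gw w' (fullUpdate δ') - Gw w δ - c - σ⁻¹ • (w' - w)‖ ^ 2
          + ‖fullUpdate δ' - δ‖ ^ 2 / τ ^ 2) := by
  obtain ⟨γf, hγf, hwγ⟩ := hw
  choose γ hγ hδγ using hδ
  have h := hMVI w' (fullUpdate δ') γf (WithLp.toLp 2 γ) hγf hγ
  have hresw : γf + Gw w' (fullUpdate δ') =
      Gw w' (fullUpdate δ') - Gw w δ - c - σ⁻¹ • (w' - w) := by
    linear_combination (norm := module) -hwγ
  have hresδ : WithLp.toLp 2 γ - Gd w' (fullUpdate δ') = -(τ⁻¹ • (fullUpdate δ' - δ)) := by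
    ext i
    simp only [PiLp.sub_apply, PiLp.neg_apply, PiLp.smul_apply, hGd, fullUpdate]
    linear_combination (norm := module) -hδγ i
  rw [hresw, hresδ] at h
  exact norm_sq_descent_of_inner_ge h

theorem neg_inner_correction_le {Gw : E → PiLp 2 Fd → E} {L11 L12 σ τ κ : ℝ}
    (hLww : ∀ (w w' : E) (δ : PiLp 2 Fd), ‖Gw w δ - Gw w' δ‖ ≤ L11 * ‖w - w'‖)
    (hLwd : ∀ (w : E) (δ δ' : PiLp 2 Fd), ‖Gw w δ - Gw w δ'‖ ≤ L12 * ‖δ - δ'‖)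
    (hσ : 0 < σ) (hτ : 0 < τ) (hL11 : 0 ≤ L11) (hκ : 0 < κ) (hκW : L11 * σ ≤ κ)
    (hκD : L12 ^ 2 * (σ * τ * n) ≤ κ ^ 2) (w wp w' : E) (δ δp : PiLp 2 Fd) :
    -⟪correction Gw w wp δ δp, w' - w⟫ ≤
      κ / σ * ‖w' - w‖ ^ 2 + κ / 2 * (‖w - wp‖ ^ 2 / σ + n * ‖δ - δp‖ ^ 2 / τ) := by
  have hcorr := mul_norm_correction_sq_le hLww hLwd hσ hτ hL11 hκW hκD w wp δ δp
  have hyoung := real_inner_le_mul_norm_sq_add (div_pos hσ (mul_pos two_pos hκ))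
    (correction Gw w wp δ δp) (w - w')
  rw [norm_sub_rev, ← neg_sub w' w, inner_neg_right,
    show 2 * (σ / (2 * κ)) = σ / κ by ring, div_div_eq_mul_div] at hyoung
  have hcorr' : σ / (2 * κ) / 2 * ‖correction Gw w wp δ δp‖ ^ 2 ≤
      κ / 2 * (‖w - wp‖ ^ 2 / σ + n * ‖δ - δp‖ ^ 2 / τ) := by
    rw [div_div, div_mul_eq_mul_div, div_le_iff₀ (by positivity)]
    linear_combination hcorr
  linear_combination hyoung + hcorr'

theorem expect_lyapunov_of_eq_off_diag [NeZero n] {Gw : E → PiLp 2 Fd → E}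
    {gw : ∀ i, E → Fd i → E} (hGw : ∀ w δ, Gw w δ = ∑ i, gw i w (δ i)) (σ τ ρ κ L11 L12 : ℝ)
    (wstar : E) (δstar : PiLp 2 Fd) (w w' : E) {δ : PiLp 2 Fd} {δ' : Fin n → PiLp 2 Fd}
    (hδ' : ∀ i j, j ≠ i → δ' i j = δ j) :
    𝔼 i, lyapunov Gw σ τ ρ κ L11 L12 wstar δstar w' w (δ' i) δ =
      ‖w' - wstar‖ ^ 2 / (2 * σ)
        + ((n - 1) * ‖δ - δstar‖ ^ 2 + ‖fullUpdate δ' - δstar‖ ^ 2) / (2 * τ)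
        - ⟪Gw w' (fullUpdate δ') - Gw w δ, w' - wstar⟫
        + (κ / (2 * σ) + 3 * ρ * L11 ^ 2) * ‖w' - w‖ ^ 2
        + (κ / (2 * τ) + 3 * ρ * n * L12 ^ 2) * ‖fullUpdate δ' - δ‖ ^ 2 := by
  have hn : (n : ℝ) ≠ 0 := NeZero.ne (n : ℝ)
  have hinner : 𝔼 i, ⟪correction Gw w' w (δ' i) δ, w' - wstar⟫ =
      ⟪Gw w' (fullUpdate δ') - Gw w δ, w' - wstar⟫ := by
    rw [Fintype.expect_eq_sum_div_card, ← sum_inner, sum_correction_of_eq_off_diag hGw w w' hδ',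
      real_inner_smul_left, Fintype.card_fin, mul_div_cancel_left₀ _ hn]
  have hstar : 𝔼 i, ‖δ' i - δstar‖ ^ 2 =
      ((n - 1) * ‖δ - δstar‖ ^ 2 + ‖fullUpdate δ' - δstar‖ ^ 2) / n := by
    rw [eq_div_iff hn, mul_comm]
    exact mul_expect_norm_sq_sub_of_eq_off_diag (NeZero.ne n) hδ'
  have hlag : 𝔼 i, ‖δ' i - δ‖ ^ 2 = ‖fullUpdate δ' - δ‖ ^ 2 / n := by
    rw [eq_div_iff hn, mul_comm, mul_expect_norm_sq_sub_of_eq_off_diag (NeZero.ne n) hδ',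
      sub_self, norm_zero]
    ring
  simp only [lyapunov, expect_add_distrib, expect_sub_distrib, Fintype.expect_const,
    ← mul_expect, ← expect_div, hinner, hstar, hlag]
  field_simp

theorem lyapunov_step [NeZero n] [∀ i, InnerProductSpace ℝ (Fd i)] {Gw : E → PiLp 2 Fd → E}
    {Gd : E → PiLp 2 Fd → PiLp 2 Fd} {gw : ∀ i, E → Fd i → E} {gd : ∀ i, E → Fd i → Fd i}
    (hGw : ∀ w δ, Gw w δ = ∑ i, gw i w (δ i)) (hGd : ∀ w δ i, Gd w δ i = gd i w (δ i))
    {L11 L12 : ℝ} (hLww : ∀ (w w' : E) (δ : PiLp 2 Fd), ‖Gw w δ - Gw w' δ‖ ≤ L11 * ‖w - w'‖)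
    (hLwd : ∀ (w : E) (δ δ' : PiLp 2 Fd), ‖Gw w δ - Gw w δ'‖ ≤ L12 * ‖δ - δ'‖)
    {f : E → ℝ} {gi : ∀ i, Fd i → ℝ} {wstar : E} {δstar : PiLp 2 Fd} {ρ : ℝ} (hρ : 0 ≤ ρ)
    (hMVI : ∀ (w : E) (δ : PiLp 2 Fd) (γf : E) (γg : PiLp 2 Fd),
      IsSubgradient f w γf → (∀ i, IsSubgradient (gi i) (δ i) (γg i)) →
      ⟪γf + Gw w δ, w - wstar⟫ + ⟪γg - Gd w δ, δ - δstar⟫ ≥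
        -(ρ / 2) * (‖γf + Gw w δ‖ ^ 2 + ‖γg - Gd w δ‖ ^ 2))
    {σ τ κ : ℝ} (hσ : 0 < σ) (hτ : 0 < τ) (hL11 : 0 ≤ L11) (hκ : 0 < κ) (hκW : L11 * σ ≤ κ)
    (hκD : L12 ^ 2 * (σ * τ * n) ≤ κ ^ 2) {w wp w' : E} {δ δp : PiLp 2 Fd}
    {δ' : Fin n → PiLp 2 Fd}
    (hw : ∃ γf, IsSubgradient f w' γf ∧
      0 = γf + σ⁻¹ • (w' - w) + Gw w δ + correction Gw w wp δ δp)
    (hδ : ∀ i, (∀ j, j ≠ i → δ' i j = δ j) ∧ ∃ γ : Fd i, IsSubgradient (gi i) (δ' i i) γ ∧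
      (0 : Fd i) = γ + τ⁻¹ • (δ' i i - δ i) - gd i w' (δ' i i)) :
    𝔼 i, lyapunov Gw σ τ ρ κ L11 L12 wstar δstar w' w (δ' i) δ
        + ((1 - 3 * κ - 3 * ρ * (σ⁻¹ + 4 * L11 ^ 2 * σ)) / (2 * σ) * ‖w' - w‖ ^ 2
          + n * (1 - κ - ρ * (τ⁻¹ + 12 * n * L12 ^ 2 * τ)) / (2 * τ) * 𝔼 i, ‖δ' i - δ‖ ^ 2) ≤
      lyapunov Gw σ τ ρ κ L11 L12 wstar δstar w wp δ δp := by
  have hoff : ∀ i j, j ≠ i → δ' i j = δ j := fun i => (hδ i).1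
  set c := correction Gw w wp δ δp
  have hdesc := descent_of_weak_minty hGd hMVI hw fun i => (hδ i).2
  have hsplit : ⟪Gw w' (fullUpdate δ') - Gw w δ - c, w' - wstar⟫ =
      ⟪Gw w' (fullUpdate δ') - Gw w δ, w' - wstar⟫ - ⟪c, w - wstar⟫ - ⟪c, w' - w⟫ := by
    rw [inner_sub_left, ← sub_add_sub_cancel w' w wstar, inner_add_right, inner_add_right]
    ring
  have hcross := neg_inner_correction_le hLww hLwd hσ hτ hL11 hκ hκW hκD w wp w' δ δp
  have hres := norm_sq_drift_sub_le hLww hLwd hσ w w' c δ (fullUpdate δ')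
  have hcsq := norm_correction_sq_le hLww hLwd w wp δ δp
  have hlag := mul_expect_norm_sq_sub_of_eq_off_diag (NeZero.ne n) (c := δ) hoff
  rw [sub_self, norm_zero] at hlag
  have hslack : 0 ≤ 3 * ρ * L12 ^ 2 * (n - 1) * ‖fullUpdate δ' - δ‖ ^ 2 := by
    have : (1 : ℝ) ≤ n := by exact_mod_cast NeZero.one_le
    have : (0 : ℝ) ≤ n - 1 := by linarith
    positivity
  have hA : (1 - 3 * κ - 3 * ρ * (σ⁻¹ + 4 * L11 ^ 2 * σ)) / (2 * σ) =
      1 / (2 * σ) - 3 * κ / (2 * σ) - 3 * ρ / (2 * σ ^ 2) - 6 * ρ * L11 ^ 2 := by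
    field_simp
    ring
  have hB : (n * (1 - κ - ρ * (τ⁻¹ + 12 * n * L12 ^ 2 * τ)) / (2 * τ) : ℝ) =
      n * (1 / (2 * τ) - κ / (2 * τ) - ρ / (2 * τ ^ 2) - 6 * ρ * n * L12 ^ 2) := by
    field_simp
    ring
  rw [expect_lyapunov_of_eq_off_diag hGw σ τ ρ κ L11 L12 wstar δstar w w' hoff, hA, hB, lyapunov]
  linear_combination hdesc + hsplit + hcross + ρ / 2 * hres + 3 * ρ / 2 * hcsq + hslack
    + (1 / (2 * τ) - κ / (2 * τ) - ρ / (2 * τ ^ 2) - 6 * ρ * n * L12 ^ 2) * hlag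

end Lyapunov

end SSIHG

/-- Histories are lists, most recent index first: `W s = w^{|s|+1}(s)` and `D s = δ^{|s|}(s)`. -/
theorem ssihg_expected_summability_squared_differences_weak_mvi_general
    {n : ℕ} (hn : 1 ≤ n)
    {E : Type*} [NormedAddCommGroup E] [InnerProductSpace ℝ E]
    {Fd : Fin n → Type*} [∀ i, NormedAddCommGroup (Fd i)]
    [∀ i, InnerProductSpace ℝ (Fd i)]
    (gw : ∀ i, E → Fd i → E) (gd : ∀ i, E → Fd i → Fd i)
    (Gw : E → PiLp 2 Fd → E)
    (hGw : ∀ w δ, Gw w δ = ∑ i, gw i w (δ i))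
    (Gd : E → PiLp 2 Fd → PiLp 2 Fd)
    (hGd : ∀ w δ i, Gd w δ i = gd i w (δ i))
    (L11 L12 : ℝ) (hL11 : 0 < L11) (hL12 : 0 < L12)
    (hLww : ∀ (w w' : E) (δ : PiLp 2 Fd), ‖Gw w δ - Gw w' δ‖ ≤ L11 * ‖w - w'‖)
    (hLwd : ∀ (w : E) (δ δ' : PiLp 2 Fd), ‖Gw w δ - Gw w δ'‖ ≤ L12 * ‖δ - δ'‖)
    (f : E → ℝ)
    (gi : ∀ i, Fd i → ℝ)
    (wstar : E) (δstar : PiLp 2 Fd) (ρ : ℝ) (hρ : 0 < ρ)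
    (hMVI : ∀ (w : E) (δ : PiLp 2 Fd) (γf : E) (γg : PiLp 2 Fd),
      IsSubgradient f w γf → (∀ i, IsSubgradient (gi i) (δ i) (γg i)) →
      ⟪γf + Gw w δ, w - wstar⟫ + ⟪γg - Gd w δ, δ - δstar⟫ ≥
        -(ρ / 2) * (‖γf + Gw w δ‖ ^ 2 + ‖γg - Gd w δ‖ ^ 2))
    (σ τ θ : ℝ) (hσ : 0 < σ) (hτ : 0 < τ) (hθ : θ = 1)
    (κ : ℝ) (hκ : κ = max (L12 * Real.sqrt (σ * τ * (n : ℝ))) (L11 * σ))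
    (hstep : κ <
      min (1 / 3 - ρ * (σ⁻¹ + 4 * L11 ^ 2 * σ))
        (1 - ρ * (τ⁻¹ + 12 * (n : ℝ) * L12 ^ 2 * τ)))
    (w0 : E) (W : List (Fin n) → E) (D : List (Fin n) → PiLp 2 Fd)
    (hupw : ∀ s : List (Fin n), ∃ γf : E, IsSubgradient f (W s) γf ∧
      (0 : E) = γf + σ⁻¹ • (W s - wat w0 W s) + Gw (wat w0 W s) (D s)
        + θ • (Gw (wat w0 W s) (D s)
          - (Gw (wat w0 W s.tail) (D s.tail)
            - ((n : ℝ) - 1) • (Gw (wat w0 W s) (D s) - Gw (wat w0 W s) (D s.tail)))))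
    (hupd : ∀ (s : List (Fin n)) (i : Fin n),
      (∀ j, j ≠ i → D (i :: s) j = D s j) ∧
      ∃ γ : Fd i, IsSubgradient (gi i) (D (i :: s) i) γ ∧
        (0 : Fd i) = γ + τ⁻¹ • (D (i :: s) i - D s i) - gd i (W s) (D (i :: s) i)) :
    ∀ K : ℕ, 1 ≤ K →
      ((1 - 3 * κ - 3 * ρ * (σ⁻¹ + 4 * L11 ^ 2 * σ)) / (2 * σ)) *
          (∑ k ∈ Finset.range K, ((n : ℝ) ^ k)⁻¹ *
            ∑ s : Fin k → Fin n, ‖W (List.ofFn s) - wat w0 W (List.ofFn s)‖ ^ 2)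
        + ((n : ℝ) * (1 - κ - ρ * (τ⁻¹ + 12 * (n : ℝ) * L12 ^ 2 * τ)) / (2 * τ)) *
          (∑ k ∈ Finset.range K, ((n : ℝ) ^ (k + 1))⁻¹ *
            ∑ s : Fin (k + 1) → Fin n,
              ‖D (List.ofFn s) - D (List.ofFn s).tail‖ ^ 2)
      ≤ (1 / (2 * σ)) * ‖wstar - w0‖ ^ 2
          + ((n : ℝ) / (2 * τ)) * ‖δstar - D []‖ ^ 2 := by
  subst hθ
  intro K _
  have : NeZero n := ⟨by omega⟩
  obtain ⟨hκ0, hκW, hκD, hκ2⟩ :=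
    SSIHG.kappa_bounds hL11 hL12 hσ hτ hρ.le hκ (hstep.trans_le (min_le_left _ _))
  have hupw' : ∀ s, ∃ γf, IsSubgradient f (W s) γf ∧ 0 = γf + σ⁻¹ • (W s - wat w0 W s)
      + Gw (wat w0 W s) (D s)
      + SSIHG.correction Gw (wat w0 W s) (wat w0 W s.tail) (D s) (D s.tail) :=
    fun s => by simpa only [one_smul, SSIHG.sub_sub_smul_eq_correction] using hupw s
  let Ψ s :=
    SSIHG.lyapunov Gw σ τ ρ κ L11 L12 wstar δstar (wat w0 W s) (wat w0 W s.tail) (D s) (D s.tail)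
  have hdecr : ∀ s, 𝔼 i, Ψ (i :: s)
      + ((1 - 3 * κ - 3 * ρ * (σ⁻¹ + 4 * L11 ^ 2 * σ)) / (2 * σ) * ‖W s - wat w0 W s‖ ^ 2
        + n * (1 - κ - ρ * (τ⁻¹ + 12 * n * L12 ^ 2 * τ)) / (2 * τ) * 𝔼 i, ‖D (i :: s) - D s‖ ^ 2)
      ≤ Ψ s := fun s =>
    (SSIHG.lyapunov_step hGw hGd hLww hLwd hρ.le hMVI hσ hτ hL11.le hκ0 hκW hκD (hupw' s)
      (hupd s) :)
  have hsum := sum_histMean_le Ψ _ hdecr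
    (fun s => SSIHG.lyapunov_nonneg hLww hLwd hσ hτ hρ.le hL11.le hκW hκD hκ2 _ _ _ _ _ _) K
  have hΨ : Ψ [] = 1 / (2 * σ) * ‖wstar - w0‖ ^ 2 + n / (2 * τ) * ‖δstar - D []‖ ^ 2 := by
    rw [show Ψ [] = _ from SSIHG.lyapunov_self Gw σ τ ρ κ L11 L12 wstar δstar w0 (D []),
      norm_sub_rev w0, norm_sub_rev (D [])]
    ring
  have hW := fun k => (histMean_eq n k fun s => ‖W s - wat w0 W s‖ ^ 2).symm
  have hD := fun k => (histMean_expect_cons n k fun s => ‖D s - D s.tail‖ ^ 2).symm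
  simp only [List.tail_cons] at hW hD
  simp only [hW, hD, ← hΨ, mul_sum, ← sum_add_distrib, ← histMean_add_mul]
  exact hsum

/-- Expected summability of squared successive differences for SSI-HG under the weak MVI
assumption (equations (thm1_5)–(thm1_6) in the proof of Theorem 1).
Index histories are encoded as lists in reverse chronological order (most recent index
first); `W s = w^{|s|+1}(s)`, `D s = δ^{|s|}(s)` (so `D [] = δ^0`), and the expectation
over the uniformly random i.i.d. index sequence is the finite average over all
histories. -/
theorem ssihg_expected_summability_squared_differences_weak_mvi
    {n : ℕ} (hn : 1 ≤ n)
    {E : Type*} [NormedAddCommGroup E] [InnerProductSpace ℝ E] [FiniteDimensional ℝ E]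
    {Fd : Fin n → Type*} [∀ i, NormedAddCommGroup (Fd i)]
    [∀ i, InnerProductSpace ℝ (Fd i)] [∀ i, FiniteDimensional ℝ (Fd i)]
    (φ : ∀ i, E → Fd i → ℝ)
    (gw : ∀ i, E → Fd i → E) (gd : ∀ i, E → Fd i → Fd i)
    (hgw : ∀ (i : Fin n) (w : E) (d : Fd i),
      HasGradientAt (fun w' => φ i w' d) (gw i w d) w)
    (hgd : ∀ (i : Fin n) (w : E) (d : Fd i),
      HasGradientAt (fun d' => φ i w d') (gd i w d) d)
    (Gw : E → PiLp 2 Fd → E)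
    (hGw : ∀ w δ, Gw w δ = ∑ i, gw i w (δ i))
    (Gd : E → PiLp 2 Fd → PiLp 2 Fd)
    (hGd : ∀ w δ i, Gd w δ i = gd i w (δ i))
    (L11 L12 L22 : ℝ) (hL11 : 0 < L11) (hL12 : 0 < L12) (hL22 : 0 < L22)
    (hLww : ∀ (w w' : E) (δ : PiLp 2 Fd), ‖Gw w δ - Gw w' δ‖ ≤ L11 * ‖w - w'‖)
    (hLdw : ∀ (w w' : E) (δ : PiLp 2 Fd), ‖Gd w δ - Gd w' δ‖ ≤ L12 * ‖w - w'‖)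
    (hLwd : ∀ (w : E) (δ δ' : PiLp 2 Fd), ‖Gw w δ - Gw w δ'‖ ≤ L12 * ‖δ - δ'‖)
    (hLdd : ∀ (w : E) (δ δ' : PiLp 2 Fd), ‖Gd w δ - Gd w δ'‖ ≤ L22 * ‖δ - δ'‖)
    (f : E → ℝ) (hf : ConvexOn ℝ Set.univ f)
    (gi : ∀ i, Fd i → ℝ) (hgi : ∀ i, ConvexOn ℝ Set.univ (gi i))
    (wstar : E) (δstar : PiLp 2 Fd) (ρ : ℝ) (hρ : 0 < ρ)
    (hMVI : ∀ (w : E) (δ : PiLp 2 Fd) (γf : E) (γg : PiLp 2 Fd),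
      IsSubgradient f w γf → (∀ i, IsSubgradient (gi i) (δ i) (γg i)) →
      ⟪γf + Gw w δ, w - wstar⟫ + ⟪γg - Gd w δ, δ - δstar⟫ ≥
        -(ρ / 2) * (‖γf + Gw w δ‖ ^ 2 + ‖γg - Gd w δ‖ ^ 2))
    (σ τ θ : ℝ) (hσ : 0 < σ) (hτ : 0 < τ) (hθ : θ = 1)
    (κ : ℝ) (hκ : κ = max (L12 * Real.sqrt (σ * τ * (n : ℝ))) (L11 * σ))
    (hstep : κ <
      min (1 / 3 - ρ * (σ⁻¹ + 4 * L11 ^ 2 * σ))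
        (1 - ρ * (τ⁻¹ + 12 * (n : ℝ) * L12 ^ 2 * τ)))
    (w0 : E) (W : List (Fin n) → E) (D : List (Fin n) → PiLp 2 Fd)
    (hupw : ∀ s : List (Fin n), ∃ γf : E, IsSubgradient f (W s) γf ∧
      (0 : E) = γf + σ⁻¹ • (W s - wat w0 W s) + Gw (wat w0 W s) (D s)
        + θ • (Gw (wat w0 W s) (D s)
          - (Gw (wat w0 W s.tail) (D s.tail)
            - ((n : ℝ) - 1) • (Gw (wat w0 W s) (D s) - Gw (wat w0 W s) (D s.tail)))))
    (hupd : ∀ (s : List (Fin n)) (i : Fin n),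
      (∀ j, j ≠ i → D (i :: s) j = D s j) ∧
      ∃ γ : Fd i, IsSubgradient (gi i) (D (i :: s) i) γ ∧
        (0 : Fd i) = γ + τ⁻¹ • (D (i :: s) i - D s i) - gd i (W s) (D (i :: s) i)) :
    ∀ K : ℕ, 1 ≤ K →
      ((1 - 3 * κ - 3 * ρ * (σ⁻¹ + 4 * L11 ^ 2 * σ)) / (2 * σ)) *
          (∑ k ∈ Finset.range K, ((n : ℝ) ^ k)⁻¹ *
            ∑ s : Fin k → Fin n, ‖W (List.ofFn s) - wat w0 W (List.ofFn s)‖ ^ 2)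
        + ((n : ℝ) * (1 - κ - ρ * (τ⁻¹ + 12 * (n : ℝ) * L12 ^ 2 * τ)) / (2 * τ)) *
          (∑ k ∈ Finset.range K, ((n : ℝ) ^ (k + 1))⁻¹ *
            ∑ s : Fin (k + 1) → Fin n,
              ‖D (List.ofFn s) - D (List.ofFn s).tail‖ ^ 2)
      ≤ (1 / (2 * σ)) * ‖wstar - w0‖ ^ 2
          + ((n : ℝ) / (2 * τ)) * ‖δstar - D []‖ ^ 2 :=
  ssihg_expected_summability_squared_differences_weak_mvi_general hn gw gd Gw hGw Gd hGd L11 L12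
    hL11 hL12 hLww hLwd f gi wstar δstar ρ hρ hMVI σ τ θ hσ hτ hθ κ hκ hstep w0 W D hupw hupd
end
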